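/- Let n ≥ 2 and N = n(n-1)/2. The map sending (s_1, s_2, …, s_N) to (s_2, …, s_N, n - s_1) is a bijection from the set SN_n of n-particle sorting networks to itself. In particular, if (s_1,…,s_N) is an n-particle sorting network then so is (s_2,…,s_N, n-s_1). -/
import Mathlib


open scoped Classical

/-- The ordered list of adjacent swaps of a word `ω`.  An entry `e : Fin (n-1)` encodes
the swap location `s = e + 1 ∈ {1, …, n-1}`; the swap `τ_s` exchanges locations `s` and
`s + 1`, i.e. it is `Equiv.swap (e+1) (e+2)`. -/
def swapList (n : ℕ) {N : ℕ} (ω : Fin N → Fin (n - 1)) : List (Equiv.Perm ℕ) :=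
  List.ofFn (fun t => Equiv.swap ((ω t : ℕ) + 1) ((ω t : ℕ) + 2))

/-- The configuration `σ_t = τ_{s_1} ⋯ τ_{s_t}` of the word `ω` at time `t`. -/
def config (n : ℕ) {N : ℕ} (ω : Fin N → Fin (n - 1)) (t : ℕ) : Equiv.Perm ℕ :=
  ((swapList n ω).take t).prod

/-- `SN n` is the set of `n`-particle sorting networks: words `ω` of length
`N = n(n-1)/2` in the letters `{1, …, n-1}` (encoded by `Fin (n-1)` via `e ↦ e+1`)
such that `τ_{s_1} ⋯ τ_{s_N}` is the reverse permutation `i ↦ n+1-i` on `{1, …, n}`. -/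
noncomputable def SN (n : ℕ) : Finset (Fin (n * (n - 1) / 2) → Fin (n - 1)) :=
  Finset.univ.filter
    (fun ω => ∀ i ∈ Finset.Icc 1 n, config n ω (n * (n - 1) / 2) i = n + 1 - i)

/-- The rotation map `(s_1, s_2, …, s_N) ↦ (s_2, …, s_N, n - s_1)`, in the encoding where
an entry `e : Fin (n-1)` represents the swap location `e + 1`: the new last entry
represents `n - s_1`, i.e. has value `n - 2 - e` where `e` encodes `s_1`. -/
def rotate (n : ℕ) (ω : Fin (n * (n - 1) / 2) → Fin (n - 1)) :
    Fin (n * (n - 1) / 2) → Fin (n - 1) := fun t =>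
  if h : (t : ℕ) + 1 < n * (n - 1) / 2 then ω ⟨(t : ℕ) + 1, h⟩
  else ⟨n - 2 - (ω ⟨0, t.pos⟩ : ℕ), by have := (ω ⟨0, t.pos⟩).pos; omega⟩

/-- Inverse rotation `(s_1, …, s_N) ↦ (n - s_N, s_1, …, s_{N-1})`. -/
def unrotate (n : ℕ) (ω : Fin (n * (n - 1) / 2) → Fin (n - 1)) :
    Fin (n * (n - 1) / 2) → Fin (n - 1) := fun t =>
  if h : 0 < (t : ℕ) then ω ⟨(t : ℕ) - 1, by have := t.2; omega⟩
  else ⟨n - 2 - (ω ⟨n * (n - 1) / 2 - 1, by have := t.2; omega⟩ : ℕ), by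
    have := (ω ⟨n * (n - 1) / 2 - 1, by have := t.2; omega⟩).pos; omega⟩

lemma key_conj (n : ℕ) (σ : Equiv.Perm ℕ) (s : ℕ) (hs1 : 1 ≤ s) (hs2 : s ≤ n - 1)
    (hn : 2 ≤ n)
    (hσ : ∀ j ∈ Finset.Icc 1 n, σ j = n + 1 - j) :
    ∀ i ∈ Finset.Icc 1 n,
      (Equiv.swap s (s + 1)) (σ ((Equiv.swap (n - s) (n - s + 1)) i)) = n + 1 - i := by
  intro i hi
  simp only [Finset.mem_Icc] at hi
  rcases eq_or_ne i (n - s) with rfl | h1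
  · rw [Equiv.swap_apply_left, hσ _ (by simp only [Finset.mem_Icc]; omega),
      show n + 1 - (n - s + 1) = s by omega, Equiv.swap_apply_left]
    omega
  · rcases eq_or_ne i (n - s + 1) with rfl | h2
    · rw [Equiv.swap_apply_right, hσ _ (by simp only [Finset.mem_Icc]; omega),
        show n + 1 - (n - s) = s + 1 by omega, Equiv.swap_apply_right]
      omega
    · rw [Equiv.swap_apply_of_ne_of_ne h1 h2, hσ _ (by simp only [Finset.mem_Icc]; omega),
        Equiv.swap_apply_of_ne_of_ne (by omega) (by omega)]

lemma prod_shift {n N k : ℕ} (hk : N = k + 1) (ω ω' : Fin N → Fin (n - 1)) (a : ℕ)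
    (h1 : ∀ (t : Fin N) (h : (t : ℕ) + 1 < N), ω' t = ω ⟨(t : ℕ) + 1, h⟩)
    (h2 : ∀ t : Fin N, ¬((t : ℕ) + 1 < N) →
      Equiv.swap ((ω' t : ℕ) + 1) ((ω' t : ℕ) + 2) = Equiv.swap a (a + 1)) :
    (swapList n ω').prod =
      (Equiv.swap ((ω ⟨0, by omega⟩ : ℕ) + 1) ((ω ⟨0, by omega⟩ : ℕ) + 2))⁻¹ *
        (swapList n ω).prod * Equiv.swap a (a + 1) := by
  subst hk
  have hω' : swapList n ω' =
      (List.ofFn fun t : Fin k =>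
        Equiv.swap ((ω t.succ : ℕ) + 1) ((ω t.succ : ℕ) + 2)).concat
        (Equiv.swap a (a + 1)) := by
    rw [swapList, List.ofFn_succ']
    congr 1
    · refine congrArg List.ofFn (funext fun i => ?_)
      have hi : ((i.castSucc : Fin (k + 1)) : ℕ) + 1 < k + 1 := by
        have := i.2; simp only [Fin.coe_castSucc]; omega
      rw [h1 _ hi]
      have : (⟨((i.castSucc : Fin (k + 1)) : ℕ) + 1, hi⟩ : Fin (k + 1)) = i.succ := by
        ext; simp
      rw [this]
    · exact h2 (Fin.last k) (by rw [Fin.val_last]; omega)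
  have hω : swapList n ω =
      Equiv.swap ((ω 0 : ℕ) + 1) ((ω 0 : ℕ) + 2) ::
        (List.ofFn fun t : Fin k =>
          Equiv.swap ((ω t.succ : ℕ) + 1) ((ω t.succ : ℕ) + 2)) := by
    rw [swapList, List.ofFn_succ]
  rw [hω', hω, List.prod_concat, List.prod_cons]
  have h0 : (⟨0, by omega⟩ : Fin (k + 1)) = 0 := rfl
  rw [h0, inv_mul_cancel_left]

lemma prod_unshift {n N k : ℕ} (hk : N = k + 1) (ω ω' : Fin N → Fin (n - 1)) (a : ℕ)
    (h1 : ∀ (t : Fin N), 0 < (t : ℕ) → ω' t = ω ⟨(t : ℕ) - 1, by have := t.2; omega⟩)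
    (h2 : Equiv.swap ((ω' ⟨0, by omega⟩ : ℕ) + 1) ((ω' ⟨0, by omega⟩ : ℕ) + 2) =
      Equiv.swap a (a + 1)) :
    (swapList n ω').prod =
      Equiv.swap a (a + 1) * (swapList n ω).prod *
        (Equiv.swap ((ω ⟨N - 1, by omega⟩ : ℕ) + 1)
          ((ω ⟨N - 1, by omega⟩ : ℕ) + 2))⁻¹ := by
  subst hk
  have hω' : swapList n ω' =
      Equiv.swap a (a + 1) ::
        (List.ofFn fun t : Fin k =>
          Equiv.swap ((ω t.castSucc : ℕ) + 1) ((ω t.castSucc : ℕ) + 2)) := by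
    rw [swapList, List.ofFn_succ]
    refine congrArg₂ List.cons h2 ?_
    refine congrArg List.ofFn (funext fun i => ?_)
    have hi : 0 < ((i.succ : Fin (k + 1)) : ℕ) := by simp
    rw [h1 _ hi]
    have : (⟨((i.succ : Fin (k + 1)) : ℕ) - 1, by have := i.succ.2; omega⟩ : Fin (k + 1)) =
        i.castSucc := by
      ext; simp
    rw [this]
  have hω : swapList n ω =
      (List.ofFn fun t : Fin k =>
        Equiv.swap ((ω t.castSucc : ℕ) + 1) ((ω t.castSucc : ℕ) + 2)).concat
        (Equiv.swap ((ω (Fin.last k) : ℕ) + 1) ((ω (Fin.last k) : ℕ) + 2)) := by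
    rw [swapList, List.ofFn_succ']
  have hlast : (⟨k + 1 - 1, by omega⟩ : Fin (k + 1)) = Fin.last k := by
    ext; simp
  rw [hω', hω, List.prod_concat, List.prod_cons, hlast]
  group

lemma config_full (n : ℕ) (ω : Fin (n * (n - 1) / 2) → Fin (n - 1)) :
    config n ω (n * (n - 1) / 2) = (swapList n ω).prod := by
  rw [config, List.take_of_length_le (by simp [swapList])]

lemma mem_SN_iff (n : ℕ) (ω : Fin (n * (n - 1) / 2) → Fin (n - 1)) :
    ω ∈ SN n ↔ ∀ i ∈ Finset.Icc 1 n, (swapList n ω).prod i = n + 1 - i := by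
  simp [SN, config_full]

lemma hN_pos (n : ℕ) (hn : 2 ≤ n) : 1 ≤ n * (n - 1) / 2 := by
  have h2 : 2 ≤ n * (n - 1) := by nlinarith [Nat.sub_le n 1, Nat.le_sub_one_of_lt hn]
  omega

lemma rotate_mem (n : ℕ) (hn : 2 ≤ n) (ω : Fin (n * (n - 1) / 2) → Fin (n - 1))
    (hω : ω ∈ SN n) : rotate n ω ∈ SN n := by
  obtain ⟨k, hk⟩ : ∃ k, n * (n - 1) / 2 = k + 1 := by
    have := hN_pos n hn; exact ⟨n * (n - 1) / 2 - 1, by omega⟩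
  rw [mem_SN_iff] at hω ⊢
  have h0 : (0 : ℕ) < n * (n - 1) / 2 := by omega
  set e : ℕ := (ω ⟨0, h0⟩ : ℕ) with he
  have hprod := prod_shift hk ω (rotate n ω) (n - (e + 1))
    (fun t h => by simp only [rotate, dif_pos h])
    (fun t h => by
      simp only [rotate, dif_neg h]
      have h1 : (⟨0, Fin.pos t⟩ : Fin (n * (n - 1) / 2)) = ⟨0, h0⟩ := rfl
      rw [h1]
      have he2 : e < n - 1 := (ω ⟨0, h0⟩).2
      congr 1 <;> omega)
  intro i hi
  rw [hprod]
  have he2 : e < n - 1 := (ω ⟨0, h0⟩).2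
  have h00 : (⟨0, by omega⟩ : Fin (n * (n - 1) / 2)) = ⟨0, h0⟩ := rfl
  rw [h00]
  simp only [Equiv.Perm.mul_apply, Equiv.swap_inv]
  have := key_conj n (swapList n ω).prod (e + 1) (by omega) (by omega) hn hω i hi
  rw [show e + 1 + 1 = e + 2 by omega] at this
  exact this

lemma unrotate_mem (n : ℕ) (hn : 2 ≤ n) (ω : Fin (n * (n - 1) / 2) → Fin (n - 1))
    (hω : ω ∈ SN n) : unrotate n ω ∈ SN n := by
  obtain ⟨k, hk⟩ : ∃ k, n * (n - 1) / 2 = k + 1 := by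
    have := hN_pos n hn; exact ⟨n * (n - 1) / 2 - 1, by omega⟩
  rw [mem_SN_iff] at hω ⊢
  have hlt : n * (n - 1) / 2 - 1 < n * (n - 1) / 2 := by omega
  set e : ℕ := (ω ⟨n * (n - 1) / 2 - 1, hlt⟩ : ℕ) with he
  have he2 : e < n - 1 := (ω ⟨n * (n - 1) / 2 - 1, hlt⟩).2
  have hprod := prod_unshift hk ω (unrotate n ω) (n - (e + 1))
    (fun t h => by
      simp only [unrotate, dif_pos h])
    (by
      have h0 : ¬ (0 : ℕ) < (0 : ℕ) := by omega
      simp only [unrotate, dif_neg h0]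
      congr 1 <;> omega)
  intro i hi
  rw [hprod]
  have hl : (⟨n * (n - 1) / 2 - 1, by omega⟩ : Fin (n * (n - 1) / 2)) =
      ⟨n * (n - 1) / 2 - 1, hlt⟩ := rfl
  rw [hl]
  simp only [Equiv.Perm.mul_apply, Equiv.swap_inv]
  have := key_conj n (swapList n ω).prod (n - (e + 1)) (by omega) (by omega) hn hω i hi
  rw [show n - (n - (e + 1)) = e + 1 by omega, show e + 1 + 1 = e + 2 by omega] at this
  exact this

lemma rotate_pos (n : ℕ) (ω : Fin (n * (n - 1) / 2) → Fin (n - 1))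
    (t : Fin (n * (n - 1) / 2)) (h : (t : ℕ) + 1 < n * (n - 1) / 2) :
    rotate n ω t = ω ⟨(t : ℕ) + 1, h⟩ := by
  simp only [rotate]; rw [dif_pos h]

lemma rotate_val_last (n : ℕ) (ω : Fin (n * (n - 1) / 2) → Fin (n - 1))
    (t : Fin (n * (n - 1) / 2)) (h : ¬((t : ℕ) + 1 < n * (n - 1) / 2))
    (p : 0 < n * (n - 1) / 2) :
    (rotate n ω t : ℕ) = n - 2 - (ω ⟨0, p⟩ : ℕ) := by
  simp only [rotate]; rw [dif_neg h]

lemma unrotate_pos (n : ℕ) (ω : Fin (n * (n - 1) / 2) → Fin (n - 1))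
    (t : Fin (n * (n - 1) / 2)) (h : 0 < (t : ℕ)) :
    unrotate n ω t = ω ⟨(t : ℕ) - 1, by have := t.2; omega⟩ := by
  simp only [unrotate]; rw [dif_pos h]

lemma unrotate_val_zero (n : ℕ) (ω : Fin (n * (n - 1) / 2) → Fin (n - 1))
    (t : Fin (n * (n - 1) / 2)) (h : (t : ℕ) = 0)
    (p : n * (n - 1) / 2 - 1 < n * (n - 1) / 2) :
    (unrotate n ω t : ℕ) = n - 2 - (ω ⟨n * (n - 1) / 2 - 1, p⟩ : ℕ) := by
  simp only [unrotate]; rw [dif_neg (by omega)]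

lemma rotate_unrotate (n : ℕ) (hn : 2 ≤ n) (ω : Fin (n * (n - 1) / 2) → Fin (n - 1)) :
    rotate n (unrotate n ω) = ω := by
  funext t
  have ht2 := t.2
  by_cases h : (t : ℕ) + 1 < n * (n - 1) / 2
  · rw [rotate_pos n _ t h, unrotate_pos n ω _ (by simp)]
    exact congrArg ω (Fin.ext (by simp))
  · have hp : 0 < n * (n - 1) / 2 := by omega
    have hq : n * (n - 1) / 2 - 1 < n * (n - 1) / 2 := by omega
    apply Fin.ext
    rw [rotate_val_last n _ t h hp, unrotate_val_zero n ω _ rfl hq]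
    have h2 := (ω ⟨n * (n - 1) / 2 - 1, hq⟩).2
    have h3 : t = ⟨n * (n - 1) / 2 - 1, hq⟩ := Fin.ext (show (t : ℕ) = n * (n - 1) / 2 - 1 by omega)
    rw [h3]
    have h4 := (ω ⟨n * (n - 1) / 2 - 1, hq⟩).pos
    omega

lemma unrotate_rotate (n : ℕ) (hn : 2 ≤ n) (ω : Fin (n * (n - 1) / 2) → Fin (n - 1)) :
    unrotate n (rotate n ω) = ω := by
  funext t
  have ht2 := t.2
  by_cases h : 0 < (t : ℕ)
  · rw [unrotate_pos n _ t h, rotate_pos n ω _ (by simp; omega)]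
    exact congrArg ω (Fin.ext (by simp; omega))
  · have hp : 0 < n * (n - 1) / 2 := by omega
    have hq : n * (n - 1) / 2 - 1 < n * (n - 1) / 2 := by omega
    apply Fin.ext
    rw [unrotate_val_zero n _ t (by omega) hq, rotate_val_last n ω _ (by simp; omega) hp]
    have h2 := (ω ⟨0, hp⟩).2
    have h3 : t = ⟨0, hp⟩ := Fin.ext (show (t : ℕ) = 0 by omega)
    rw [h3]
    have h4 := (ω ⟨0, hp⟩).pos
    omega

/-- The map `(s_1, s_2, …, s_N) ↦ (s_2, …, s_N, n - s_1)` is a bijection from `SN n` to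
itself; in particular, if `(s_1, …, s_N)` is an `n`-particle sorting network then so is
`(s_2, …, s_N, n - s_1)`. -/
theorem stmt3 (n : ℕ) (hn : 2 ≤ n) :
    Set.BijOn (rotate n) (SN n : Set (Fin (n * (n - 1) / 2) → Fin (n - 1)))
      (SN n : Set (Fin (n * (n - 1) / 2) → Fin (n - 1))) := by
  refine ⟨fun ω hω => rotate_mem n hn ω hω, ?_, ?_⟩
  · intro ω₁ _ ω₂ _ h
    have := congrArg (unrotate n) h
    rwa [unrotate_rotate n hn, unrotate_rotate n hn] at this
  · intro ω hω
    exact ⟨unrotate n ω, unrotate_mem n hn ω hω, rotate_unrotate n hn ω⟩
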